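/- arXiv:2504.13933 — 2 statements merged into one kernel-verified Lean document; each statement's English description precedes it below -/
import Mathlib

section
/- Let a, b : ℤ with a ≤ b, and let n, m, β : ℤ → ℝ. Suppose: (i) β l = 0 for every integer l not in Finset.Icc a (b-1); (ii) β l ≥ 0 for every l; (iii) stationarity: m l = n l + β (l-1) - β l for every l ∈ Finset.Icc a b; (iv) primal feasibility: m l ≤ m (l+1) for every l ∈ Finset.Icc a (b-1); (v) complementary slackness: β l * (m l - m (l+1)) = 0 for every l ∈ Finset.Icc a (b-1). Then for every m' : ℤ → ℝ with m' l ≤ m' (l+1) for all l ∈ Finset.Icc a (b-1), Σ_{l ∈ Finset.Icc a b} (m l - n l)^2 ≤ Σ_{l ∈ Finset.Icc a b} (m' l - n l)^2. -/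
theorem stmt_11 (a b : ℤ) (hab : a ≤ b) (n m β : ℤ → ℝ)
    (hβ0 : ∀ l : ℤ, l ∉ Finset.Icc a (b - 1) → β l = 0)
    (hβnonneg : ∀ l : ℤ, 0 ≤ β l)
    (hstat : ∀ l ∈ Finset.Icc a b, m l = n l + β (l - 1) - β l)
    (hfeas : ∀ l ∈ Finset.Icc a (b - 1), m l ≤ m (l + 1))
    (hcs : ∀ l ∈ Finset.Icc a (b - 1), β l * (m l - m (l + 1)) = 0) :
    ∀ m' : ℤ → ℝ, (∀ l ∈ Finset.Icc a (b - 1), m' l ≤ m' (l + 1)) →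
      ∑ l ∈ Finset.Icc a b, (m l - n l) ^ 2 ≤
        ∑ l ∈ Finset.Icc a b, (m' l - n l) ^ 2 := by
  intro m' hm'
  set x : ℤ → ℝ := fun l => m' l - m l with hx
  -- key: ∑ (m l - n l) * x l ≥ 0
  have key : 0 ≤ ∑ l ∈ Finset.Icc a b, (m l - n l) * x l := by
    have h1 : ∑ l ∈ Finset.Icc a b, (m l - n l) * x l
        = ∑ l ∈ Finset.Icc a b, (β (l - 1) * x l - β l * x l) := by
      apply Finset.sum_congr rfl
      intro l hl
      rw [hstat l hl]; ring
    rw [h1, Finset.sum_sub_distrib]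
    -- reindex first sum
    have h2 : ∑ l ∈ Finset.Icc a b, β (l - 1) * x l
        = ∑ l ∈ Finset.Icc (a - 1) (b - 1), β l * x (l + 1) := by
      apply Finset.sum_nbij' (fun l => l - 1) (fun l => l + 1)
      · intro l hl; simp only [Finset.mem_Icc] at *; omega
      · intro l hl; simp only [Finset.mem_Icc] at *; omega
      · intro l _; omega
      · intro l _; omega
      · intro l _; norm_num
    rw [h2]
    have hab' : a - 1 ≤ b - 1 := by omega
    have h3 : ∑ l ∈ Finset.Icc (a - 1) (b - 1), β l * x (l + 1)
        = ∑ l ∈ Finset.Icc a (b - 1), β l * x (l + 1) := by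
      rw [show Finset.Icc (a - 1) (b - 1) = insert (a - 1) (Finset.Icc a (b - 1)) by
        ext l; simp only [Finset.mem_insert, Finset.mem_Icc]; omega]
      rw [Finset.sum_insert (by simp), hβ0 (a - 1) (by simp), zero_mul, zero_add]
    have h4 : ∑ l ∈ Finset.Icc a b, β l * x l
        = ∑ l ∈ Finset.Icc a (b - 1), β l * x l := by
      rw [show Finset.Icc a b = insert b (Finset.Icc a (b - 1)) by
        ext l; simp only [Finset.mem_insert, Finset.mem_Icc]; omega]
      rw [Finset.sum_insert (by simp), hβ0 b (by simp), zero_mul, zero_add]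
    rw [h3, h4, ← Finset.sum_sub_distrib]
    apply Finset.sum_nonneg
    intro l hl
    have hcsl := hcs l hl
    have : β l * x (l + 1) - β l * x l = β l * (m' (l + 1) - m' l) := by
      simp only [hx]
      have : β l * (m (l + 1) - m l) = 0 := by nlinarith [hcsl]
      nlinarith [this]
    rw [this]
    exact mul_nonneg (hβnonneg l) (by linarith [hm' l hl])
  have expand : ∑ l ∈ Finset.Icc a b, (m' l - n l) ^ 2
      = ∑ l ∈ Finset.Icc a b, (m l - n l) ^ 2
        + 2 * ∑ l ∈ Finset.Icc a b, (m l - n l) * x l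
        + ∑ l ∈ Finset.Icc a b, x l ^ 2 := by
    rw [Finset.mul_sum, ← Finset.sum_add_distrib, ← Finset.sum_add_distrib]
    apply Finset.sum_congr rfl
    intro l _
    simp only [hx]; ring
  have hsq : 0 ≤ ∑ l ∈ Finset.Icc a b, x l ^ 2 :=
    Finset.sum_nonneg fun l _ => sq_nonneg _
  linarith
end

section
/- Let a, p, q, b : ℤ with a ≤ p ≤ q ≤ b. Let n : ℤ → ℝ and set d = (Σ_{l ∈ Finset.Icc p q} n l) / (q - p + 1). Define m : ℤ → ℝ by m l = d for l ∈ Finset.Icc p q and m l = n l otherwise. Suppose: (i) m l ≤ m (l+1) for every l ∈ Finset.Icc a (b-1); and (ii) Σ_{i ∈ Finset.Icc p l} (n i - d) ≥ 0 for every l ∈ Finset.Icc p (q-1). Then for every m' : ℤ → ℝ with m' l ≤ m' (l+1) for all l ∈ Finset.Icc a (b-1), Σ_{l ∈ Finset.Icc a b} (m l - n l)^2 ≤ Σ_{l ∈ Finset.Icc a b} (m' l - n l)^2. -/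
/-!
Since `m` is the average `d` on the block `[p, q]` and equals `n` elsewhere, it suffices to show the
variational inequality `∑ (m - n) (m' - m) ≥ 0` for monotone `m'`. This sum lives on the block, where
it equals `-∑ (n - d) (m' - d)`; summation by parts with the partial sums
`β_l = ∑_{i=p}^{l} (n i - d)` rewrites the latter as `∑ β_l (m' l - m' (l + 1)) + β_q (m' q - d)`, where
`β_q = 0` and each remaining term is `≤ 0` because `β_l ≥ 0`.
-/

open Finset

section

variable {R : Type*}

lemma sum_Icc_add_one_top [AddCommMonoid R] {p q : ℤ} (h : p ≤ q + 1) (f : ℤ → R) :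
    ∑ l ∈ Icc p (q + 1), f l = ∑ l ∈ Icc p q, f l + f (q + 1) := by
  rw [← insert_Icc_right_eq_Icc_add_one h, sum_insert (by simp), add_comm]

lemma sum_Icc_mul_eq_sum_partialSum_mul_sub [CommRing R] (c x : ℤ → R) {p q : ℤ} (hpq : p ≤ q) :
    ∑ l ∈ Icc p q, c l * x l =
      ∑ l ∈ Icc p (q - 1), (∑ i ∈ Icc p l, c i) * (x l - x (l + 1)) +
        (∑ i ∈ Icc p q, c i) * x q := by
  induction q, hpq using Int.leInduction with
  | base => simp
  | succ q hpq ih =>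
    have hlast := sum_Icc_add_one_top (p := p) (q := q - 1) (by omega)
      fun l => (∑ i ∈ Icc p l, c i) * (x l - x (l + 1))
    simp only [sub_add_cancel] at hlast
    rw [sum_Icc_add_one_top (by omega), ih, add_sub_cancel_right, hlast,
      sum_Icc_add_one_top (by omega)]
    ring

lemma sum_Icc_mul_nonpos_of_partialSum_nonneg [CommRing R] [LinearOrder R] [IsStrictOrderedRing R]
    {c x : ℤ → R} {p q : ℤ} (hpq : p ≤ q)
    (hpartial : ∀ l ∈ Icc p (q - 1), 0 ≤ ∑ i ∈ Icc p l, c i) (htotal : ∑ i ∈ Icc p q, c i = 0)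
    (hx : ∀ l ∈ Icc p (q - 1), x l ≤ x (l + 1)) :
    ∑ l ∈ Icc p q, c l * x l ≤ 0 := by
  rw [sum_Icc_mul_eq_sum_partialSum_mul_sub c x hpq, htotal, zero_mul, add_zero]
  exact sum_nonpos fun l hl => mul_nonpos_of_nonneg_of_nonpos (hpartial l hl)
    (sub_nonpos.2 (hx l hl))

lemma sum_sq_sub_le_of_sum_mul_nonneg [CommRing R] [LinearOrder R] [IsStrictOrderedRing R]
    {ι : Type*} (s : Finset ι) {m m' n : ι → R}
    (h : 0 ≤ ∑ i ∈ s, (m i - n i) * (m' i - m i)) :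
    ∑ i ∈ s, (m i - n i) ^ 2 ≤ ∑ i ∈ s, (m' i - n i) ^ 2 := by
  have hexpand : ∑ i ∈ s, (m' i - n i) ^ 2 = ∑ i ∈ s, (m i - n i) ^ 2 +
      2 * ∑ i ∈ s, (m i - n i) * (m' i - m i) + ∑ i ∈ s, (m' i - m i) ^ 2 := by
    rw [mul_sum, ← sum_add_distrib, ← sum_add_distrib]
    exact sum_congr rfl fun i _ => by ring
  have hsq : 0 ≤ ∑ i ∈ s, (m' i - m i) ^ 2 := sum_nonneg fun i _ => sq_nonneg _
  linarith

end

lemma sum_Icc_sub_average_eq_zero {p q : ℤ} (hpq : p ≤ q) (n : ℤ → ℝ) :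
    ∑ i ∈ Icc p q, (n i - (∑ l ∈ Icc p q, n l) / ((q - p + 1 : ℤ) : ℝ)) = 0 := by
  have hcard : ((#(Icc p q) : ℕ) : ℝ) = ((q - p + 1 : ℤ) : ℝ) := by
    rw [Int.card_Icc]; norm_cast; omega
  have hne : ((q - p + 1 : ℤ) : ℝ) ≠ 0 := by exact_mod_cast (show q - p + 1 ≠ 0 by omega)
  rw [sum_sub_distrib, sum_const, nsmul_eq_mul, hcard, mul_div_cancel₀ _ hne, sub_self]

theorem stmt_12_general (a p q b : ℤ) (hap : a ≤ p) (hpq : p ≤ q) (hqb : q ≤ b)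
    (n : ℤ → ℝ) (d : ℝ)
    (hd : d = (∑ l ∈ Finset.Icc p q, n l) / ((q - p + 1 : ℤ) : ℝ))
    (m : ℤ → ℝ)
    (hm : ∀ l : ℤ, m l = if l ∈ Finset.Icc p q then d else n l)
    (hmult : ∀ l ∈ Finset.Icc p (q - 1), 0 ≤ ∑ i ∈ Finset.Icc p l, (n i - d)) :
    ∀ m' : ℤ → ℝ, (∀ l ∈ Finset.Icc a (b - 1), m' l ≤ m' (l + 1)) →
      ∑ l ∈ Finset.Icc a b, (m l - n l) ^ 2 ≤
        ∑ l ∈ Finset.Icc a b, (m' l - n l) ^ 2 := by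
  intro m' hm'
  apply sum_sq_sub_le_of_sum_mul_nonneg
  have hblock : ∑ l ∈ Icc a b, (m l - n l) * (m' l - m l) =
      -∑ l ∈ Icc p q, (n l - d) * (m' l - d) := by
    rw [← sum_subset (Icc_subset_Icc hap hqb) fun l _ hl => by simp [hm l, hl],
      ← sum_neg_distrib]
    exact sum_congr rfl fun l hl => by rw [hm l, if_pos hl]; ring
  have hnonpos : ∑ l ∈ Icc p q, (n l - d) * (m' l - d) ≤ 0 :=
    sum_Icc_mul_nonpos_of_partialSum_nonneg hpq hmult (hd ▸ sum_Icc_sub_average_eq_zero hpq n)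
      fun l hl => sub_le_sub_right (hm' l (Icc_subset_Icc (by omega) (by omega) hl)) d
  linarith

theorem stmt_12 (a p q b : ℤ) (hap : a ≤ p) (hpq : p ≤ q) (hqb : q ≤ b)
    (n : ℤ → ℝ) (d : ℝ)
    (hd : d = (∑ l ∈ Finset.Icc p q, n l) / ((q - p + 1 : ℤ) : ℝ))
    (m : ℤ → ℝ)
    (hm : ∀ l : ℤ, m l = if l ∈ Finset.Icc p q then d else n l)
    (hfeas : ∀ l ∈ Finset.Icc a (b - 1), m l ≤ m (l + 1))
    (hmult : ∀ l ∈ Finset.Icc p (q - 1), 0 ≤ ∑ i ∈ Finset.Icc p l, (n i - d)) :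
    ∀ m' : ℤ → ℝ, (∀ l ∈ Finset.Icc a (b - 1), m' l ≤ m' (l + 1)) →
      ∑ l ∈ Finset.Icc a b, (m l - n l) ^ 2 ≤
        ∑ l ∈ Finset.Icc a b, (m' l - n l) ^ 2 :=
  stmt_12_general a p q b hap hpq hqb n d hd m hm hmult
end
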